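/- arXiv:2102.11951 — 2 statements merged into one kernel-verified Lean document; each statement's English description precedes it below -/
import Mathlib

section
/- Let H ⊂ V be real Hilbert/Banach spaces forming a Gelfand triple V ↪ H ≅ H' ↪ V', S ⊂ V a closed subspace, and define D : (S, ‖·‖_{V'}) → (S, ‖·‖_V)' by (Du)(v) = ⟨u,v⟩_H. If Q : V → V is the H-orthogonal projection onto S and Q is bounded on V with norm ‖Q‖_{L(V,V)}, then D is injective with ‖D⁻¹‖_{L((S,‖·‖_V)', (S,‖·‖_{V'}))} ≤ ‖Q‖_{L(V,V)} (where D⁻¹ is defined on the range), i.e., for every u ∈ S: sup_{0≠v∈S} ⟨u,v⟩_H/‖v‖_V ≥ ‖Q‖⁻¹_{L(V,V)} · ‖u‖_{V'}. -/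
open scoped RealInnerProductSpace

/-- Gelfand-triple inf-sup estimate: with `V` densely and continuously embedded
(via `ι`) in a Hilbert space `H`, `S ⊆ V` a closed subspace and `Q : V → V` the
`H`-orthogonal projection onto `S` (assumed bounded on `V`), one has for all `u ∈ S`
`sup_{0≠v∈S} ⟨u,v⟩_H/‖v‖_V ≥ ‖Q‖⁻¹ · sup_{0≠v∈V} ⟨u,v⟩_H/‖v‖_V`,
the right-hand supremum being `‖Q‖⁻¹ ‖u‖_{V'}`. -/
theorem stmt11 {V H : Type*} [NormedAddCommGroup V] [NormedSpace ℝ V]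
    [NormedAddCommGroup H] [InnerProductSpace ℝ H]
    (ι : V →L[ℝ] H) (hinj : Function.Injective ι) (hdense : DenseRange ι)
    (S : Submodule ℝ V) (hS : IsClosed (S : Set V))
    (Q : V →L[ℝ] V) (hQmem : ∀ v, Q v ∈ S) (hQid : ∀ s ∈ S, Q s = s)
    (horth : ∀ v : V, ∀ s ∈ S, ⟪ι (v - Q v), ι s⟫ = 0) :
    ∀ u ∈ S,
      ‖Q‖⁻¹ * sSup {r : ℝ | ∃ v : V, v ≠ 0 ∧ r = ⟪ι u, ι v⟫ / ‖v‖}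
        ≤ sSup {r : ℝ | ∃ v ∈ S, v ≠ 0 ∧ r = ⟪ι u, ι v⟫ / ‖v‖} := by
  intro u hu
  set A : Set ℝ := {r : ℝ | ∃ v : V, v ≠ 0 ∧ r = ⟪ι u, ι v⟫ / ‖v‖} with hA
  set B : Set ℝ := {r : ℝ | ∃ v ∈ S, v ≠ 0 ∧ r = ⟪ι u, ι v⟫ / ‖v‖} with hB
  by_cases hu0 : u = 0
  · subst hu0
    have hAle : sSup A ≤ 0 := by
      apply Real.sSup_le _ le_rfl
      rintro r ⟨v, hv, rfl⟩
      simp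
    have hBge : 0 ≤ sSup B := by
      apply Real.sSup_nonneg
      rintro r ⟨v, hvS, hv, rfl⟩
      simp
    have : ‖Q‖⁻¹ * sSup A ≤ 0 :=
      mul_nonpos_of_nonneg_of_nonpos (inv_nonneg.mpr (norm_nonneg _)) hAle
    linarith
  -- u ≠ 0
  have hQne : Q ≠ 0 := by
    intro h
    apply hu0
    have := hQid u hu
    rw [h] at this
    simpa using this.symm
  have hQpos : 0 < ‖Q‖ := norm_pos_iff.mpr hQne
  have hιu : ι u ≠ 0 := fun h => hu0 (hinj (by simpa using h))
  -- B is bounded above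
  have hBbdd : BddAbove B := by
    refine ⟨‖ι u‖ * ‖ι‖, ?_⟩
    rintro r ⟨v, hvS, hv, rfl⟩
    have hvpos : (0:ℝ) < ‖v‖ := norm_pos_iff.mpr hv
    rw [div_le_iff₀ hvpos]
    calc ⟪ι u, ι v⟫ ≤ ‖ι u‖ * ‖ι v‖ := real_inner_le_norm _ _
      _ ≤ ‖ι u‖ * (‖ι‖ * ‖v‖) := by
          gcongr; exact ι.le_opNorm v
      _ = ‖ι u‖ * ‖ι‖ * ‖v‖ := by ring
  -- sSup B ≥ 0
  have hBmem : ‖ι u‖ ^ 2 / ‖u‖ ∈ B := by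
    refine ⟨u, hu, hu0, ?_⟩
    rw [real_inner_self_eq_norm_sq]
  have hBge : 0 ≤ sSup B := by
    refine le_trans ?_ (le_csSup hBbdd hBmem)
    positivity
  -- key estimate
  have hAle : sSup A ≤ ‖Q‖ * sSup B := by
    apply Real.sSup_le _ (by positivity)
    rintro r ⟨v, hv, rfl⟩
    have hvpos : (0:ℝ) < ‖v‖ := norm_pos_iff.mpr hv
    have h1 : ⟪ι u, ι v⟫ = ⟪ι u, ι (Q v)⟫ := by
      have h0 := horth v u hu
      rw [map_sub, inner_sub_left] at h0
      have e1 := real_inner_comm (ι v) (ι u)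
      have e2 := real_inner_comm (ι (Q v)) (ι u)
      linarith
    by_cases hQv : Q v = 0
    · rw [h1, hQv]
      simp only [map_zero, inner_zero_right, zero_div]
      positivity
    · have hQvpos : (0:ℝ) < ‖Q v‖ := norm_pos_iff.mpr hQv
      by_cases hpos : 0 ≤ ⟪ι u, ι (Q v)⟫
      · have hb : ⟪ι u, ι (Q v)⟫ / ‖Q v‖ ≤ sSup B :=
          le_csSup hBbdd ⟨Q v, hQmem v, hQv, rfl⟩
        have h2 : ⟪ι u, ι (Q v)⟫ ≤ sSup B * ‖Q v‖ := by
          rw [← div_le_iff₀ hQvpos] at *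
          exact hb
        have h3 : ‖Q v‖ ≤ ‖Q‖ * ‖v‖ := Q.le_opNorm v
        rw [h1, div_le_iff₀ hvpos]
        calc ⟪ι u, ι (Q v)⟫ ≤ sSup B * ‖Q v‖ := h2
          _ ≤ sSup B * (‖Q‖ * ‖v‖) := by gcongr
          _ = ‖Q‖ * sSup B * ‖v‖ := by ring
      · push_neg at hpos
        have : ⟪ι u, ι v⟫ / ‖v‖ ≤ 0 := by
          apply div_nonpos_of_nonpos_of_nonneg _ (norm_nonneg v)
          rw [h1]; linarith
        have : (0:ℝ) ≤ ‖Q‖ * sSup B := by positivity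
        linarith
  calc ‖Q‖⁻¹ * sSup A ≤ ‖Q‖⁻¹ * (‖Q‖ * sSup B) := by
        gcongr
      _ = sSup B := by field_simp
end

section
/- In the preceding construction, if Σ_{ν∈N} φ_ν = 𝟙 and c_ν = ⟨𝟙, φ_ν⟩ for all ν, then Σ_{ν∈N} φ̃_ν = 𝟙, i.e., the biorthogonal functions also form a partition of unity. -/
open scoped RealInnerProductSpace
open MeasureTheory

/-- If the nodal basis forms a partition of unity, `Σ_ν φ_ν = 𝟙`, and
`c_ν = ⟨𝟙, φ_ν⟩`, then the biorthogonal functions from the bubble construction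
also form a partition of unity: `Σ_ν φ̃_ν = 𝟙`. -/
theorem stmt17 {Ω : Type*} [MeasurableSpace Ω] (μ : Measure Ω) [IsFiniteMeasure μ]
    {N : Type*} [Fintype N] [DecidableEq N]
    (φ θ : N → Lp ℝ 2 μ) (hind : LinearIndependent ℝ φ)
    (one : Lp ℝ 2 μ)
    (hone : one = indicatorConstLp 2 MeasurableSet.univ (measure_ne_top μ _) (1 : ℝ))
    (hsum : ∑ ν, φ ν = one)
    (horth : ∀ ν ν', ν ≠ ν' → ⟪θ ν, φ ν'⟫ = 0)
    (hne : ∀ ν, ⟪θ ν, φ ν⟫ ≠ 0)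
    (c : N → ℝ) (hc : ∀ ν, c ν = ⟪one, φ ν⟫)
    (φt : N → Lp ℝ 2 μ)
    (hφt : ∀ ν, φt ν = φ ν + (c ν / ⟪θ ν, φ ν⟫) • θ ν
      - ∑ ν', (⟪φ ν, φ ν'⟫ / ⟪θ ν', φ ν'⟫) • θ ν') :
    ∑ ν, φt ν = one := by
  have key : ∑ ν, ∑ ν', (⟪φ ν, φ ν'⟫ / ⟪θ ν', φ ν'⟫) • θ ν'
      = ∑ ν, (c ν / ⟪θ ν, φ ν⟫) • θ ν := by
    rw [Finset.sum_comm]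
    refine Finset.sum_congr rfl fun ν' _ => ?_
    rw [← Finset.sum_smul, ← Finset.sum_div, ← sum_inner, hsum, ← hc]
  simp only [hφt]
  rw [Finset.sum_sub_distrib, Finset.sum_add_distrib, key, hsum]
  abel
end
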